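/- arXiv:1911.08889 — 2 statements merged into one kernel-verified Lean document; each statement's English description precedes it below -/
import Mathlib

section
/- Every finite weakly claw-free graph is Z-insensitive; that is, if G is weakly claw-free, then for every D ⊆ V(G) there is no vertex v ∉ N[D] with N(v) ⊆ N[D] such that every u ∈ N(v) has at least two neighbors outside N[D]. -/
open Finset

open scoped Classical

noncomputable section

namespace ZGamePaper

variable {V : Type*} {W : Type*}

/-- The closed neighborhood `N[v]` of a vertex as a `Finset`. -/
def closedNF [Fintype V] (G : SimpleGraph V) (v : V) : Finset V :=
  Finset.univ.filter fun x => x = v ∨ G.Adj v x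

/-- The open neighborhood `N(v)` of a vertex as a `Finset`. -/
def openNF [Fintype V] (G : SimpleGraph V) (v : V) : Finset V :=
  Finset.univ.filter fun x => G.Adj v x

lemma openNF_subset_closedNF [Fintype V] (G : SimpleGraph V) (v : V) :
    openNF G v ⊆ closedNF G v := by
  intro x hx
  simp only [openNF, closedNF, mem_filter] at hx ⊢
  exact ⟨hx.1, Or.inr hx.2⟩

lemma measure_dec [Fintype V] {A C : Finset V} {w : V} (hw : w ∈ C) (hwA : w ∉ A) :
    (Finset.univ \ (A ∪ C)).card < (Finset.univ \ A).card := by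
  apply Finset.card_lt_card
  rw [Finset.ssubset_iff_of_subset
    (Finset.sdiff_subset_sdiff (le_refl _) Finset.subset_union_left)]
  refine ⟨w, ?_, ?_⟩
  · simp [hwA]
  · simp [hw]

/-! ### The Z-domination game -/

/-- The set of legal moves in the Z-domination game, given the set `A` of
already dominated vertices: a vertex `v` is legal if `N(v) ⊄ A`. -/
def zLegal [Fintype V] (G : SimpleGraph V) (A : Finset V) : Finset V :=
  Finset.univ.filter fun v => ¬ openNF G v ⊆ A

lemma zLegal_dec [Fintype V] (G : SimpleGraph V) (A : Finset V) {v : V}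
    (hv : v ∈ zLegal G A) :
    (Finset.univ \ (A ∪ closedNF G v)).card < (Finset.univ \ A).card := by
  simp only [zLegal, mem_filter] at hv
  obtain ⟨w, hw1, hw2⟩ := Finset.not_subset.mp hv.2
  exact measure_dec (openNF_subset_closedNF G v hw1) hw2

/-- The optimal number of remaining moves in the Z-domination game played on `G`,
where `A` is the set of already dominated vertices and `turn = true` iff it is
Dominator's (the minimizer's) turn. -/
def zVal [Fintype V] (G : SimpleGraph V) (turn : Bool) (A : Finset V) : ℕ :=
  if h : (zLegal G A).Nonempty then
    if turn then
      1 + ((zLegal G A).attach.inf' h.attach fun v => zVal G false (A ∪ closedNF G v.1))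
    else
      1 + ((zLegal G A).attach.sup' h.attach fun v => zVal G true (A ∪ closedNF G v.1))
  else 0
termination_by (Finset.univ \ A).card
decreasing_by
  · exact zLegal_dec G A v.2
  · exact zLegal_dec G A v.2

/-- The game Z-domination number `γ_Zg(G)` (Dominator starts). -/
def gammaZg [Fintype V] (G : SimpleGraph V) : ℕ := zVal G true ∅

/-- The Staller-start game Z-domination number `γ'_Zg(G)`. -/
def gammaZg' [Fintype V] (G : SimpleGraph V) : ℕ := zVal G false ∅

/-! ### The (ordinary) domination game -/

/-- The set of legal moves in the domination game: `v` is legal if `N[v] ⊄ A`.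
This set is nonempty if and only if `A ≠ V(G)`. -/
def dLegal [Fintype V] (G : SimpleGraph V) (A : Finset V) : Finset V :=
  Finset.univ.filter fun v => ¬ closedNF G v ⊆ A

lemma dLegal_dec [Fintype V] (G : SimpleGraph V) (A : Finset V) {v : V}
    (hv : v ∈ dLegal G A) :
    (Finset.univ \ (A ∪ closedNF G v)).card < (Finset.univ \ A).card := by
  simp only [dLegal, mem_filter] at hv
  obtain ⟨w, hw1, hw2⟩ := Finset.not_subset.mp hv.2
  exact measure_dec hw1 hw2

/-- The optimal number of remaining moves in the domination game on `G`, with `A`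
the set of already dominated vertices; `turn = true` iff it is Dominator's turn.
(There is no legal move iff `A = V(G)`.) -/
def dVal [Fintype V] (G : SimpleGraph V) (turn : Bool) (A : Finset V) : ℕ :=
  if h : (dLegal G A).Nonempty then
    if turn then
      1 + ((dLegal G A).attach.inf' h.attach fun v => dVal G false (A ∪ closedNF G v.1))
    else
      1 + ((dLegal G A).attach.sup' h.attach fun v => dVal G true (A ∪ closedNF G v.1))
  else 0
termination_by (Finset.univ \ A).card
decreasing_by
  · exact dLegal_dec G A v.2
  · exact dLegal_dec G A v.2

/-- The game domination number `γ_g(G)` (Dominator starts). -/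
def gammaGg [Fintype V] (G : SimpleGraph V) : ℕ := dVal G true ∅

/-- The Staller-start game domination number `γ'_g(G)`. -/
def gammaGg' [Fintype V] (G : SimpleGraph V) : ℕ := dVal G false ∅

/-! ### The total domination game -/

/-- The set of legal moves in the total domination game: `v` is legal if `N(v) ⊄ B`.
For a graph without isolated vertices this set is nonempty iff `B ≠ V(G)`. -/
def tLegal [Fintype V] (G : SimpleGraph V) (B : Finset V) : Finset V :=
  Finset.univ.filter fun v => ¬ openNF G v ⊆ B

lemma tLegal_dec [Fintype V] (G : SimpleGraph V) (B : Finset V) {v : V}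
    (hv : v ∈ tLegal G B) :
    (Finset.univ \ (B ∪ openNF G v)).card < (Finset.univ \ B).card := by
  simp only [tLegal, mem_filter] at hv
  obtain ⟨w, hw1, hw2⟩ := Finset.not_subset.mp hv.2
  exact measure_dec hw1 hw2

/-- The optimal number of remaining moves in the total domination game on `G`,
with `B` the set of already totally dominated vertices; `turn = true` iff it is
Dominator's turn. -/
def tVal [Fintype V] (G : SimpleGraph V) (turn : Bool) (B : Finset V) : ℕ :=
  if h : (tLegal G B).Nonempty then
    if turn then
      1 + ((tLegal G B).attach.inf' h.attach fun v => tVal G false (B ∪ openNF G v.1))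
    else
      1 + ((tLegal G B).attach.sup' h.attach fun v => tVal G true (B ∪ openNF G v.1))
  else 0
termination_by (Finset.univ \ B).card
decreasing_by
  · exact tLegal_dec G B v.2
  · exact tLegal_dec G B v.2

/-- The game total domination number `γ_tg(G)` (Dominator starts). -/
def gammaTg [Fintype V] (G : SimpleGraph V) : ℕ := tVal G true ∅

/-! ### The L-domination game -/

/-- The set of legal moves in the L-domination game, given the set `P` of vertices
played so far: `v` is legal if `v ∉ P` and `N[v] ⊄ N(P)`. -/
def lLegal [Fintype V] (G : SimpleGraph V) (P : Finset V) : Finset V :=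
  Finset.univ.filter fun v => v ∉ P ∧ ¬ closedNF G v ⊆ P.biUnion (openNF G)

lemma lLegal_dec [Fintype V] (G : SimpleGraph V) (P : Finset V) {v : V}
    (hv : v ∈ lLegal G P) :
    (Finset.univ \ insert v P).card < (Finset.univ \ P).card := by
  simp only [lLegal, mem_filter] at hv
  apply Finset.card_lt_card
  rw [Finset.ssubset_iff_of_subset
    (Finset.sdiff_subset_sdiff (le_refl _) (Finset.subset_insert _ _))]
  exact ⟨v, by simp [hv.2.1], by simp⟩

/-- The optimal number of remaining moves in the L-domination game on `G`, with `P`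
the set of vertices played so far; `turn = true` iff it is Dominator's turn. -/
def lVal [Fintype V] (G : SimpleGraph V) (turn : Bool) (P : Finset V) : ℕ :=
  if h : (lLegal G P).Nonempty then
    if turn then
      1 + ((lLegal G P).attach.inf' h.attach fun v => lVal G false (insert v.1 P))
    else
      1 + ((lLegal G P).attach.sup' h.attach fun v => lVal G true (insert v.1 P))
  else 0
termination_by (Finset.univ \ P).card
decreasing_by
  · exact lLegal_dec G P v.2
  · exact lLegal_dec G P v.2

/-- The game L-domination number `γ_Lg(G)` (Dominator starts). -/
def gammaLg [Fintype V] (G : SimpleGraph V) : ℕ := lVal G true ∅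

/-! ### Domination number and related notions -/

/-- The domination number `γ(G)`: the minimum size of a set `S` with `N[S] = V(G)`. -/
def gammaNum [Fintype V] (G : SimpleGraph V) : ℕ :=
  sInf {k | ∃ S : Finset V, S.card = k ∧ ∀ v : V, ∃ u ∈ S, v ∈ closedNF G u}

/-- The partially dominated graph `G|A` has a Z-configuration if there is an
undominated vertex `v` all of whose neighbors are dominated, while every neighbor
of `v` has at least two undominated neighbors. -/
def HasZConfig [Fintype V] (G : SimpleGraph V) (A : Finset V) : Prop :=
  ∃ v : V, v ∉ A ∧ openNF G v ⊆ A ∧ ∀ u ∈ openNF G v, 2 ≤ (openNF G u \ A).card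

/-- A graph without isolated vertices is Z-insensitive if for every `D ⊆ V(G)` the
partially dominated graph `G|N[D]` has no Z-configuration. -/
def ZInsensitive [Fintype V] (G : SimpleGraph V) : Prop :=
  (∀ v : V, ∃ u : V, G.Adj v u) ∧
    ∀ D : Finset V, ¬ HasZConfig G (D.biUnion (closedNF G))

/-- A vertex `w` is the center of a claw if it has three pairwise non-adjacent
neighbors. -/
def IsClawCenter (G : SimpleGraph V) (w : V) : Prop :=
  ∃ a b c : V, G.Adj w a ∧ G.Adj w b ∧ G.Adj w c ∧ a ≠ b ∧ a ≠ c ∧ b ≠ c ∧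
    ¬ G.Adj a b ∧ ¬ G.Adj a c ∧ ¬ G.Adj b c

/-- A graph is weakly claw-free if every vertex has a neighbor that is not the
center of a claw. -/
def WeaklyClawFree (G : SimpleGraph V) : Prop :=
  ∀ v : V, ∃ u : V, G.Adj v u ∧ ¬ IsClawCenter G u

/-- The lexicographic product `G ∘ H`. -/
def lexProd (G : SimpleGraph V) (H : SimpleGraph W) : SimpleGraph (V × W) where
  Adj p q := G.Adj p.1 q.1 ∨ (p.1 = q.1 ∧ H.Adj p.2 q.2)
  symm := ⟨by
    rintro p q (h | ⟨h1, h2⟩)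
    · exact Or.inl h.symm
    · exact Or.inr ⟨h1.symm, h2.symm⟩⟩
  loopless := ⟨by
    rintro p (h | ⟨_, h⟩)
    · exact G.loopless.irrefl _ h
    · exact H.loopless.irrefl _ h⟩

section

variable [Fintype V] {G : SimpleGraph V}

lemma mem_openNF {u v : V} : v ∈ openNF G u ↔ G.Adj u v := by
  simp [openNF]

lemma mem_biUnion_closedNF {D : Finset V} {a : V} :
    a ∈ D.biUnion (closedNF G) ↔ ∃ d ∈ D, a = d ∨ G.Adj d a := by
  simp [closedNF]

lemma ne_and_not_adj_of_notMem_biUnion_closedNF {D : Finset V} {d x : V} (hd : d ∈ D)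
    (hx : x ∉ D.biUnion (closedNF G)) : d ≠ x ∧ ¬ G.Adj d x :=
  ⟨fun hdx => hx (mem_biUnion_closedNF.2 ⟨d, hd, .inl hdx.symm⟩),
    fun hdx => hx (mem_biUnion_closedNF.2 ⟨d, hd, .inr hdx⟩)⟩

/-- The third leg of the claw is a neighbour of `u` in `D`: it exists because `u` is dominated
but adjacent to the undominated `v`, and it sees neither `v` nor `x`. -/
lemma isClawCenter_of_adj_notMem_biUnion_closedNF {D : Finset V} {u v x : V}
    (hu : u ∈ D.biUnion (closedNF G)) (huv : G.Adj u v) (hux : G.Adj u x) (hvx : v ≠ x)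
    (hnvx : ¬ G.Adj v x) (hv : v ∉ D.biUnion (closedNF G)) (hx : x ∉ D.biUnion (closedNF G)) :
    IsClawCenter G u := by
  obtain ⟨d, hd, rfl | hdu⟩ := mem_biUnion_closedNF.1 hu
  · exact absurd huv (ne_and_not_adj_of_notMem_biUnion_closedNF hd hv).2
  obtain ⟨hdv, hndv⟩ := ne_and_not_adj_of_notMem_biUnion_closedNF hd hv
  obtain ⟨hdx, hndx⟩ := ne_and_not_adj_of_notMem_biUnion_closedNF hd hx
  exact ⟨d, v, x, hdu.symm, huv, hux, hdv, hdx, hvx, hndv, hndx, hnvx⟩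

lemma not_hasZConfig_biUnion_closedNF (h : WeaklyClawFree G) (D : Finset V) :
    ¬ HasZConfig G (D.biUnion (closedNF G)) := by
  rintro ⟨v, hv, hNv, hdeg⟩
  obtain ⟨u, hvu, hnclaw⟩ := h v
  have hu : u ∈ openNF G v := mem_openNF.2 hvu
  obtain ⟨x, hx, hxv⟩ := exists_mem_ne (hdeg u hu) v
  rw [mem_sdiff, mem_openNF] at hx
  exact hnclaw <| isClawCenter_of_adj_notMem_biUnion_closedNF (hNv hu) hvu.symm hx.1
    (Ne.symm hxv) (fun hvx => hx.2 (hNv (mem_openNF.2 hvx))) hv hx.2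

end

/-- Every finite weakly claw-free graph is Z-insensitive. -/
theorem weaklyClawFree_zInsensitive {V : Type*} [Fintype V] (G : SimpleGraph V)
    (h : WeaklyClawFree G) :
    ZInsensitive G :=
  ⟨fun v => (h v).imp fun _ hu => hu.1, not_hasZConfig_biUnion_closedNF h⟩

end ZGamePaper
end
end

section
/- If G is a finite graph in which every vertex u has a true twin v distinct from u (i.e., N[u] = N[v] and u ≠ v), then G is Z-insensitive. -/
open Finset

open scoped Classical

noncomputable section

namespace ZGamePaper

variable {V : Type*} {W : Type*}

section TrueTwins

variable [Fintype V] {G : SimpleGraph V}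

@[simp]
lemma mem_closedNF {x y : V} : x ∈ closedNF G y ↔ x = y ∨ G.Adj y x := by
  simp [closedNF]

lemma mem_closedNF_comm {x y : V} : x ∈ closedNF G y ↔ y ∈ closedNF G x := by
  simp only [mem_closedNF, eq_comm, G.adj_comm]

lemma adj_of_closedNF_eq {u v : V} (hne : v ≠ u) (he : closedNF G v = closedNF G u) :
    G.Adj u v := by
  have hu : u ∈ closedNF G v := by simp [he]
  exact ((mem_closedNF.mp hu).resolve_left hne.symm).symm

lemma mem_biUnion_closedNF_congr {D : Finset V} {u v : V}
    (he : closedNF G v = closedNF G u) :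
    v ∈ D.biUnion (closedNF G) ↔ u ∈ D.biUnion (closedNF G) := by
  simp only [mem_biUnion]
  refine exists_congr fun d => and_congr_right fun _ => ?_
  rw [mem_closedNF_comm, he, ← mem_closedNF_comm]

/-- The twin `v` itself is a neighbour of `u` outside `N[D]`. -/
lemma not_openNF_subset_biUnion_closedNF {D : Finset V} {u v : V} (hne : v ≠ u)
    (he : closedNF G v = closedNF G u) (hu : u ∉ D.biUnion (closedNF G)) :
    ¬ openNF G u ⊆ D.biUnion (closedNF G) := fun hsub =>
  hu <| (mem_biUnion_closedNF_congr he).mp <|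
    hsub (by simpa [openNF] using adj_of_closedNF_eq hne he)

end TrueTwins

/-- If every vertex of a finite graph `G` has a true twin distinct
from itself, then `G` is Z-insensitive. -/
theorem zInsensitive_of_trueTwins {V : Type*} [Fintype V] (G : SimpleGraph V)
    (h : ∀ u : V, ∃ v : V, v ≠ u ∧ closedNF G v = closedNF G u) :
    ZInsensitive G := by
  refine ⟨fun u => ?_, fun D => ?_⟩
  · obtain ⟨v, hne, he⟩ := h u
    exact ⟨v, adj_of_closedNF_eq hne he⟩
  · rintro ⟨u, hu, hsub, -⟩
    obtain ⟨v, hne, he⟩ := h u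
    exact not_openNF_subset_biUnion_closedNF hne he hu hsub

end ZGamePaper
end
end
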